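/- arXiv:2404.18902 — 2 statements merged into one kernel-verified Lean document; each statement's English description precedes it below -/
import Mathlib

section
/- Let Z be a standard Gaussian random variable, ψ > 0, and g : ℝ → ℝ a continuous nonnegative function with g(0) = 0 and g(x) ≤ C·x² for |x| ≤ 1 (for some C > 0). Then E[(ι + g(ψ^{1/2} Z))⁻¹] → +∞ as ι ↓ 0. In fact, E[(ι + g(ψ^{1/2}Z))⁻¹] ≥ c·ι^{-1/2} for some constant c > 0 and all sufficiently small ι > 0. -/
/-!
On the interval `|z| ≤ r` with `r = √ι / (√ψ √C)` the quadratic bound gives `g(√ψ z) ≤ ι`, so the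
integrand is at least `(2ι)⁻¹` there. The Gaussian density is bounded below on `[-1, 1]`, so this
interval has Gaussian mass of order `r ∝ √ι`, and Markov's inequality yields a lower bound of order
`ι⁻¹ · √ι = ι^{-1/2}`.
-/

open MeasureTheory ProbabilityTheory Filter Set

lemma gaussianPDFReal_one_le_of_abs_le_one {x : ℝ} (hx : |x| ≤ 1) :
    gaussianPDFReal 0 1 1 ≤ gaussianPDFReal 0 1 x := by
  have hx2 : x ^ 2 ≤ 1 := by nlinarith [sq_abs x, abs_nonneg x]
  simp only [gaussianPDFReal, NNReal.coe_one, mul_one, sub_zero, one_pow]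
  gcongr

lemma gaussianPDFReal_one_mul_volume_le_gaussianReal {s : Set ℝ} (hs : MeasurableSet s)
    (hs1 : s ⊆ Icc (-1) 1) :
    gaussianPDFReal 0 1 1 * volume.real s ≤ (gaussianReal 0 1).real s := by
  have hvol : volume s ≠ ⊤ := measure_ne_top_of_subset hs1 (by simp)
  conv_rhs => rw [measureReal_def, gaussianReal_apply_eq_integral 0 one_ne_zero,
    ENNReal.toReal_ofReal (setIntegral_nonneg hs fun x _ => gaussianPDFReal_nonneg 0 1 x)]
  refine setIntegral_ge_of_const_le_real hs hvol (fun x hx => ?_)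
    (integrable_gaussianPDFReal 0 1).integrableOn
  exact gaussianPDFReal_one_le_of_abs_le_one (abs_le.mpr (hs1 hx))

lemma integrable_inv_const_add {α : Type*} [MeasurableSpace α] {μ : Measure α}
    [IsFiniteMeasure μ] {h : α → ℝ} (hm : AEMeasurable h μ) (hh_nonneg : ∀ x, 0 ≤ h x)
    {ι : ℝ} (hι : 0 < ι) : Integrable (fun x => (ι + h x)⁻¹) μ := by
  refine Integrable.mono' (integrable_const ι⁻¹)
    (aemeasurable_const.add hm).inv.aestronglyMeasurable ?_
  filter_upwards with x
  rw [Real.norm_eq_abs, abs_of_pos (inv_pos.mpr (by linarith [hh_nonneg x]))]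
  exact inv_anti₀ hι (le_add_of_nonneg_right (hh_nonneg x))

lemma mul_rpow_neg_half_le_integral_inv_add {g : ℝ → ℝ} (hgm : Measurable g)
    (hg_nonneg : ∀ x, 0 ≤ g x) {C s : ℝ} (hC : 0 < C) (hs : 0 < s)
    (hquad : ∀ x : ℝ, |x| ≤ 1 → g x ≤ C * x ^ 2) {ι : ℝ} (hι : 0 < ι) (hιC : ι ≤ C)
    (hιs : ι ≤ C * s ^ 2) :
    gaussianPDFReal 0 1 1 / (s * √C) * ι ^ (-(1:ℝ)/2) ≤
      ∫ z, (ι + g (s * z))⁻¹ ∂gaussianReal 0 1 := by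
  set r := √ι / (s * √C) with hr
  have hr0 : 0 ≤ r := by positivity
  have hr2 : C * s ^ 2 * r ^ 2 = ι := by
    rw [hr, div_pow, mul_pow, Real.sq_sqrt hι.le, Real.sq_sqrt hC.le]
    field_simp
  have hr1 : r ≤ 1 := by
    have hr21 : r ^ 2 ≤ 1 := le_of_mul_le_mul_left (by rwa [mul_one, hr2]) (by positivity)
    exact (pow_le_one_iff_of_nonneg hr0 two_ne_zero).mp hr21
  have hlow : Icc (-r) r ⊆ {z | (2 * ι)⁻¹ ≤ (ι + g (s * z))⁻¹} := by
    intro z hz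
    have hCsz : C * (s * z) ^ 2 ≤ ι := calc
      C * (s * z) ^ 2 = C * s ^ 2 * z ^ 2 := by ring
      _ ≤ C * s ^ 2 * r ^ 2 := mul_le_mul_of_nonneg_left (sq_le_sq' hz.1 hz.2) (by positivity)
      _ = ι := hr2
    have hsz : |s * z| ≤ 1 :=
      (sq_le_one_iff_abs_le_one _).mp (le_of_mul_le_mul_left (by linarith) hC)
    have hg : g (s * z) ≤ ι := (hquad _ hsz).trans hCsz
    show (2 * ι)⁻¹ ≤ (ι + g (s * z))⁻¹
    exact inv_anti₀ (by linarith [hg_nonneg (s * z)]) (by linarith)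
  have hf_int := integrable_inv_const_add (μ := gaussianReal 0 1) (h := fun z => g (s * z))
    (hgm.comp (measurable_const_mul s)).aemeasurable (fun z => hg_nonneg (s * z)) hι
  calc gaussianPDFReal 0 1 1 / (s * √C) * ι ^ (-(1:ℝ)/2)
      = (2 * ι)⁻¹ * (gaussianPDFReal 0 1 1 * volume.real (Icc (-r) r)) := by
        rw [Real.volume_real_Icc_of_le (by linarith), hr, neg_div, Real.rpow_neg hι.le,
          ← Real.sqrt_eq_rpow]
        field_simp
        rw [Real.sq_sqrt hι.le]
        ring
    _ ≤ (2 * ι)⁻¹ * (gaussianReal 0 1).real (Icc (-r) r) := by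
        gcongr
        exact gaussianPDFReal_one_mul_volume_le_gaussianReal measurableSet_Icc
          (Icc_subset_Icc (by linarith) hr1)
    _ ≤ (2 * ι)⁻¹ * (gaussianReal 0 1).real {z | (2 * ι)⁻¹ ≤ (ι + g (s * z))⁻¹} := by
        gcongr
        exact measure_ne_top _ _
    _ ≤ ∫ z, (ι + g (s * z))⁻¹ ∂gaussianReal 0 1 :=
        mul_meas_ge_le_integral_of_nonneg
          (ae_of_all _ fun z => inv_nonneg.mpr (by linarith [hg_nonneg (s * z)])) hf_int _

theorem stmt_3_general (ψ : ℝ) (hψ : 0 < ψ) (g : ℝ → ℝ) (hgcont : Continuous g)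
    (hgnonneg : ∀ x, 0 ≤ g x)
    (C : ℝ) (hC : 0 < C) (hquad : ∀ x : ℝ, |x| ≤ 1 → g x ≤ C * x ^ 2) :
    (∃ c > (0:ℝ), ∃ ι₀ > (0:ℝ), ∀ ι : ℝ, 0 < ι → ι ≤ ι₀ →
      c * ι ^ (-(1:ℝ)/2) ≤ ∫ z, (ι + g (Real.sqrt ψ * z))⁻¹ ∂(gaussianReal 0 1)) ∧
    Tendsto (fun ι : ℝ => ∫ z, (ι + g (Real.sqrt ψ * z))⁻¹ ∂(gaussianReal 0 1))
      (nhdsWithin 0 (Ioi 0)) atTop := by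
  set c := gaussianPDFReal 0 1 1 / (√ψ * √C)
  have hc : 0 < c := by
    have := gaussianPDFReal_pos 0 1 1 one_ne_zero
    positivity
  have hbound : ∀ ι : ℝ, 0 < ι → ι ≤ min C (C * ψ) →
      c * ι ^ (-(1:ℝ)/2) ≤ ∫ z, (ι + g (√ψ * z))⁻¹ ∂(gaussianReal 0 1) :=
    fun ι hι hι₀ => mul_rpow_neg_half_le_integral_inv_add hgcont.measurable hgnonneg hC
      (Real.sqrt_pos.mpr hψ) hquad hι (hι₀.trans (min_le_left _ _))
      (by rw [Real.sq_sqrt hψ.le]; exact hι₀.trans (min_le_right _ _))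
  have hι₀ : 0 < min C (C * ψ) := lt_min hC (mul_pos hC hψ)
  refine ⟨⟨c, hc, _, hι₀, hbound⟩, ?_⟩
  refine tendsto_atTop_mono' _ ?_
    ((tendsto_rpow_neg_nhdsGT_zero (by norm_num : -(1:ℝ)/2 < 0)).const_mul_atTop hc)
  filter_upwards [Ioc_mem_nhdsGT hι₀] with ι hι
  exact hbound ι hι.1 hι.2

/-- For `Z` standard Gaussian, `ψ > 0`, `g` continuous nonnegative with `g(0) = 0` and
`g(x) ≤ C x²` for `|x| ≤ 1`, one has `E[(ι + g(ψ^{1/2} Z))⁻¹] ≥ c ι^{-1/2}` for some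
`c > 0` and all small `ι > 0`; in particular the expectation tends to `+∞` as `ι ↓ 0`. -/
theorem stmt_3 (ψ : ℝ) (hψ : 0 < ψ) (g : ℝ → ℝ) (hgcont : Continuous g)
    (hgnonneg : ∀ x, 0 ≤ g x) (hg0 : g 0 = 0)
    (C : ℝ) (hC : 0 < C) (hquad : ∀ x : ℝ, |x| ≤ 1 → g x ≤ C * x ^ 2) :
    (∃ c > (0:ℝ), ∃ ι₀ > (0:ℝ), ∀ ι : ℝ, 0 < ι → ι ≤ ι₀ →
      c * ι ^ (-(1:ℝ)/2) ≤ ∫ z, (ι + g (Real.sqrt ψ * z))⁻¹ ∂(gaussianReal 0 1)) ∧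
    Tendsto (fun ι : ℝ => ∫ z, (ι + g (Real.sqrt ψ * z))⁻¹ ∂(gaussianReal 0 1))
      (nhdsWithin 0 (Ioi 0)) atTop :=
  stmt_3_general ψ hψ g hgcont hgnonneg C hC hquad
end

section
/- Let μ, μ' be probability measures on ℝ³ with finite second moments such that the marginals of μ have finite fourth moments. Let f₁, f₂, f₃ : ℝ → ℝ be L-Lipschitz with f₃ also bounded by L. Then there is a constant C depending only on μ and L such that |E_{(x,y,z)∼μ}[f₁(x)f₂(y)f₃(z)] − E_{(x,y,z)∼μ'}[f₁(x)f₂(y)f₃(z)]| ≤ C·max(W₂(μ,μ'), W₂(μ,μ')²), where W₂ is the 2-Wasserstein distance. -/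
open MeasureTheory

/-- The 2-Wasserstein distance between measures on `ℝ³` (Euclidean cost), defined as the
infimum over couplings of the square root of the expected squared Euclidean distance. -/
noncomputable def W2 (μ ν : Measure (ℝ × ℝ × ℝ)) : ℝ :=
  sInf { r : ℝ | ∃ π : Measure ((ℝ × ℝ × ℝ) × (ℝ × ℝ × ℝ)),
    IsProbabilityMeasure π ∧ π.map Prod.fst = μ ∧ π.map Prod.snd = ν ∧
    r = Real.sqrt (∫ p, ((p.1.1 - p.2.1) ^ 2 + (p.1.2.1 - p.2.2.1) ^ 2
        + (p.1.2.2 - p.2.2.2) ^ 2) ∂π) }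

private lemma amgm (t α β : ℝ) (ht : 0 < t) : α * β ≤ (t/2) * α^2 + (1/(2*t)) * β^2 := by
  have key : (t/2) * α^2 + (1/(2*t)) * β^2 - α*β = (t*α - β)^2 / (2*t) := by
    field_simp; ring
  have h2 : (0:ℝ) ≤ (t*α - β)^2 / (2*t) := div_nonneg (sq_nonneg _) (by linarith)
  linarith

private lemma lip_abs {L : ℝ} (hL : 0 ≤ L) {f : ℝ → ℝ}
    (hf : LipschitzWith (Real.toNNReal L) f) (x y : ℝ) : |f x - f y| ≤ L * |x - y| := by
  have h := hf.dist_le_mul x y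
  rwa [Real.dist_eq, Real.dist_eq, Real.coe_toNNReal L hL] at h

private lemma lip_bound {L : ℝ} (hL : 0 ≤ L) {f : ℝ → ℝ}
    (hf : LipschitzWith (Real.toNNReal L) f) (x : ℝ) : |f x| ≤ |f 0| + L * |x| := by
  have h := lip_abs hL hf x 0
  have h2 : |f x| ≤ |f x - f 0| + |f 0| := by
    calc |f x| = |(f x - f 0) + f 0| := by ring_nf
    _ ≤ |f x - f 0| + |f 0| := abs_add_le _ _
  simp only [sub_zero] at h
  linarith

set_option maxHeartbeats 2000000 in
private lemma key_arith (L t a b X Y u v w A A' B B' P P' : ℝ)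
    (hL : 0 ≤ L) (ht : 0 < t) (hX : 0 ≤ X) (hY : 0 ≤ Y)
    (hu : 0 ≤ u) (hv : 0 ≤ v) (hw : 0 ≤ w) (ha : 0 ≤ a) (hb : 0 ≤ b)
    (hA' : |A'| ≤ a + L*X + L*u)
    (hB : |B| ≤ b + L*Y) (hB' : |B'| ≤ b + L*Y + L*v)
    (hP : |P| ≤ L)
    (hAA : |A - A'| ≤ L*u) (hBB : |B - B'| ≤ L*v)
    (hPP : |P - P'| ≤ L*w) (hPP2 : |P - P'| ≤ 2*L) :
    |A*B*P - A'*B'*P'| ≤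
      (t/2) * (9*L^4*(b+L*Y)^2 + 9*L^4*(a+L*X)^2 + L^2*((a+L*X)*(b+L*Y))^2)
      + (1/(2*t) + 3*L^3) * (u^2+v^2+w^2) := by
  have hM0 : 0 ≤ |P - P'| := abs_nonneg _
  have key : |A*B*P - A'*B'*P'| ≤
      |A - A'| * |B| * |P| + |A'| * |B - B'| * |P| + |A'| * |B'| * |P - P'| := by
    have e : A*B*P - A'*B'*P' = (A-A')*B*P + A'*(B-B')*P + A'*B'*(P-P') := by ring
    calc |A*B*P - A'*B'*P'| = |(A-A') * B * P + A' * (B-B') * P + A' * B' * (P-P')| := by rw [e]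
    _ ≤ |(A-A') * B * P| + |A' * (B-B') * P| + |A' * B' * (P-P')| := abs_add_three _ _ _
    _ = |A - A'| * |B| * |P| + |A'| * |B - B'| * |P| + |A'| * |B'| * |P - P'| := by
        simp [abs_mul]
  have hBpos : (0:ℝ) ≤ b + L*Y := by positivity
  have hApos : (0:ℝ) ≤ a + L*X := by positivity
  have t1 : |A - A'| * |B| * |P| ≤ (L*u)*(b+L*Y)*L := by
    apply mul_le_mul (mul_le_mul hAA hB (abs_nonneg _) (by positivity)) hP (abs_nonneg _)
    positivity
  have t2 : |A'| * |B - B'| * |P| ≤ (a+L*X+L*u)*(L*v)*L := by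
    apply mul_le_mul (mul_le_mul hA' hBB (abs_nonneg _) (by positivity)) hP (abs_nonneg _)
    positivity
  have t3 : |A'| * |B'| * |P - P'| ≤ (a+L*X+L*u)*(b+L*Y+L*v) * |P - P'| := by
    apply mul_le_mul_of_nonneg_right (mul_le_mul hA' hB' (abs_nonneg _) (by positivity)) hM0
  have c1 : (a+L*X)*(b+L*Y) * |P - P'| ≤ (a+L*X)*(b+L*Y)*(L*w) :=
    mul_le_mul_of_nonneg_left hPP (mul_nonneg hApos hBpos)
  have c2 : ((a+L*X)*(L*v)) * |P - P'| ≤ ((a+L*X)*(L*v))*(2*L) :=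
    mul_le_mul_of_nonneg_left hPP2 (by positivity)
  have c3 : ((L*u)*(b+L*Y)) * |P - P'| ≤ ((L*u)*(b+L*Y))*(2*L) :=
    mul_le_mul_of_nonneg_left hPP2 (by positivity)
  have c4 : ((L*u)*(L*v)) * |P - P'| ≤ ((L*u)*(L*v))*(2*L) :=
    mul_le_mul_of_nonneg_left hPP2 (by positivity)
  have hstep : |A*B*P - A'*B'*P'| ≤
      3*L^2*(b+L*Y)*u + 3*L^2*(a+L*X)*v + L*((a+L*X)*(b+L*Y))*w + 3*L^3*(u*v) := by
    have e3 : (a+L*X+L*u)*(b+L*Y+L*v) * |P - P'| = (a+L*X)*(b+L*Y) * |P - P'|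
        + ((a+L*X)*(L*v)) * |P - P'| + ((L*u)*(b+L*Y)) * |P - P'|
        + ((L*u)*(L*v)) * |P - P'| := by ring
    linarith [key, t1, t2, t3, e3, c1, c2, c3, c4]
  have g1 : (3*L^2*(b+L*Y))*u ≤ (t/2)*(3*L^2*(b+L*Y))^2 + (1/(2*t))*u^2 := amgm t _ _ ht
  have g2 : (3*L^2*(a+L*X))*v ≤ (t/2)*(3*L^2*(a+L*X))^2 + (1/(2*t))*v^2 := amgm t _ _ ht
  have g3 : (L*((a+L*X)*(b+L*Y)))*w ≤ (t/2)*(L*((a+L*X)*(b+L*Y)))^2 + (1/(2*t))*w^2 :=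
    amgm t _ _ ht
  have huv : 3*L^3*(u*v) ≤ 3*L^3*(u^2+v^2+w^2) := by
    have h1 : u*v ≤ u^2+v^2+w^2 := by nlinarith [sq_nonneg (u-v), sq_nonneg w]
    have h2 : (0:ℝ) ≤ 3*L^3 := by positivity
    exact mul_le_mul_of_nonneg_left h1 h2
  linarith [hstep, g1, g2, g3, huv]

private lemma int_x2 {ν : Measure (ℝ×ℝ×ℝ)}
    (hq : Integrable (fun p : ℝ×ℝ×ℝ => p.1^2+p.2.1^2+p.2.2^2) ν) :
    Integrable (fun p : ℝ×ℝ×ℝ => p.1^2) ν := by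
  refine hq.mono ((continuous_fst.pow 2).aestronglyMeasurable) (ae_of_all _ fun p => ?_)
  simp only [Real.norm_eq_abs]
  rw [abs_of_nonneg (by positivity), abs_of_nonneg (by positivity)]
  nlinarith [sq_nonneg p.2.1, sq_nonneg p.2.2]

private lemma int_y2 {ν : Measure (ℝ×ℝ×ℝ)}
    (hq : Integrable (fun p : ℝ×ℝ×ℝ => p.1^2+p.2.1^2+p.2.2^2) ν) :
    Integrable (fun p : ℝ×ℝ×ℝ => p.2.1^2) ν := by
  refine hq.mono (((continuous_fst.comp continuous_snd).pow 2).aestronglyMeasurable)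
    (ae_of_all _ fun p => ?_)
  simp only [Real.norm_eq_abs]
  rw [abs_of_nonneg (by positivity), abs_of_nonneg (by positivity)]
  nlinarith [sq_nonneg p.1, sq_nonneg p.2.2]

private lemma int_F {ν : Measure (ℝ×ℝ×ℝ)} [IsProbabilityMeasure ν]
    (hq : Integrable (fun p : ℝ×ℝ×ℝ => p.1^2+p.2.1^2+p.2.2^2) ν)
    {L : ℝ} (hL0 : 0 ≤ L) {f₁ f₂ f₃ : ℝ → ℝ}
    (hf₁ : LipschitzWith (Real.toNNReal L) f₁)
    (hf₂ : LipschitzWith (Real.toNNReal L) f₂)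
    (hf₃ : LipschitzWith (Real.toNNReal L) f₃)
    (hf₃bd : ∀ x, |f₃ x| ≤ L) :
    Integrable (fun p : ℝ×ℝ×ℝ => f₁ p.1 * f₂ p.2.1 * f₃ p.2.2) ν := by
  have hc : Continuous fun p : ℝ×ℝ×ℝ => f₁ p.1 * f₂ p.2.1 * f₃ p.2.2 :=
    ((hf₁.continuous.comp continuous_fst).mul
      (hf₂.continuous.comp (continuous_fst.comp continuous_snd))).mul
      (hf₃.continuous.comp (continuous_snd.comp continuous_snd))
  set a := |f₁ 0| with ha_def
  set b := |f₂ 0| with hb_def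
  have ha : 0 ≤ a := abs_nonneg _
  have hb : 0 ≤ b := abs_nonneg _
  set K := L*(a*b + a*L + b*L + L^2) with hK_def
  have hKnn : 0 ≤ K := by positivity
  refine Integrable.mono ((hq.const_mul K).add (integrable_const K))
    hc.aestronglyMeasurable (ae_of_all _ fun p => ?_)
  obtain ⟨x, y, z⟩ := p
  simp only [Real.norm_eq_abs]
  have h1 : |f₁ x| ≤ a + L * |x| := lip_bound hL0 hf₁ x
  have h2 : |f₂ y| ≤ b + L * |y| := lip_bound hL0 hf₂ y
  have h3 : |f₃ z| ≤ L := hf₃bd z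
  have hstep : |f₁ x * f₂ y * f₃ z| ≤ (a + L*|x|) * (b + L*|y|) * L := by
    rw [abs_mul, abs_mul]
    apply mul_le_mul (mul_le_mul h1 h2 (abs_nonneg _) (by positivity)) h3 (abs_nonneg _)
    positivity
  have hx2 : |x|^2 = x^2 := sq_abs x
  have hy2 : |y|^2 = y^2 := sq_abs y
  have hrhs : |K * (x^2+y^2+z^2) + K| = K * (x^2+y^2+z^2) + K := by
    rw [abs_of_nonneg (by positivity)]
  simp only [Pi.add_apply]
  rw [hrhs]
  have hfin : (a + L*|x|) * (b + L*|y|) * L ≤ K * (x^2+y^2+z^2) + K := by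
    rw [hK_def]
    nlinarith [mul_nonneg (mul_nonneg hL0 (mul_nonneg hL0 ha)) (sq_nonneg (|y| - 1)),
      mul_nonneg (mul_nonneg hL0 (mul_nonneg hL0 hb)) (sq_nonneg (|x| - 1)),
      mul_nonneg (mul_nonneg hL0 (mul_nonneg hL0 hL0)) (sq_nonneg (|x| - |y|)),
      mul_nonneg (mul_nonneg (mul_nonneg hL0 ha) hb) (sq_nonneg x),
      mul_nonneg (mul_nonneg (mul_nonneg hL0 ha) hb) (sq_nonneg y),
      mul_nonneg (mul_nonneg (mul_nonneg hL0 ha) hb) (sq_nonneg z),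
      mul_nonneg (mul_nonneg hL0 (mul_nonneg hL0 ha)) (sq_nonneg x),
      mul_nonneg (mul_nonneg hL0 (mul_nonneg hL0 ha)) (sq_nonneg z),
      mul_nonneg (mul_nonneg hL0 (mul_nonneg hL0 hb)) (sq_nonneg y),
      mul_nonneg (mul_nonneg hL0 (mul_nonneg hL0 hb)) (sq_nonneg z),
      mul_nonneg (mul_nonneg hL0 (mul_nonneg hL0 hL0)) (sq_nonneg x),
      mul_nonneg (mul_nonneg hL0 (mul_nonneg hL0 hL0)) (sq_nonneg y),
      mul_nonneg (mul_nonneg hL0 (mul_nonneg hL0 hL0)) (sq_nonneg z),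
      mul_nonneg hL0 (mul_nonneg hL0 hL0),
      mul_nonneg (mul_nonneg hL0 hL0) ha,
      mul_nonneg (mul_nonneg hL0 hL0) hb,
      mul_nonneg (mul_nonneg hL0 (mul_nonneg hL0 ha)) (abs_nonneg y),
      mul_nonneg (mul_nonneg hL0 (mul_nonneg hL0 hb)) (abs_nonneg x),
      hx2, hy2]
  linarith

private lemma int_G {μ : Measure (ℝ×ℝ×ℝ)} [IsProbabilityMeasure μ]
    (hμ2 : Integrable (fun p : ℝ×ℝ×ℝ => p.1^2+p.2.1^2+p.2.2^2) μ)
    (hμ4a : Integrable (fun p : ℝ×ℝ×ℝ => p.1^4) μ)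
    (hμ4b : Integrable (fun p : ℝ×ℝ×ℝ => p.2.1^4) μ)
    (L a b : ℝ) (hL0 : 0 ≤ L) (ha : 0 ≤ a) (hb : 0 ≤ b) :
    Integrable (fun p : ℝ×ℝ×ℝ => 9*L^4*(b+L*|p.2.1|)^2 + 9*L^4*(a+L*|p.1|)^2
      + L^2*((a+L*|p.1|)*(b+L*|p.2.1|))^2) μ := by
  have hax : Continuous fun p : ℝ×ℝ×ℝ => a + L*|p.1| :=
    continuous_const.add (continuous_const.mul continuous_fst.abs)
  have hby : Continuous fun p : ℝ×ℝ×ℝ => b + L*|p.2.1| :=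
    continuous_const.add (continuous_const.mul (continuous_fst.comp continuous_snd).abs)
  have p1 : Integrable (fun p : ℝ×ℝ×ℝ => 9*L^4*(b+L*|p.2.1|)^2) μ := by
    refine Integrable.mono (((int_y2 hμ2).const_mul (9*L^4*(2*L^2))).add
        (integrable_const (9*L^4*(2*b^2))))
      ((continuous_const.mul (hby.pow 2)).aestronglyMeasurable) (ae_of_all _ fun p => ?_)
    simp only [Pi.add_apply, Real.norm_eq_abs]
    refine abs_le_abs_of_nonneg (by positivity) ?_
    have h : (b + L*|p.2.1|)^2 ≤ 2*b^2 + 2*L^2*|p.2.1|^2 := by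
      nlinarith [sq_nonneg (b - L*|p.2.1|)]
    calc 9*L^4*(b+L*|p.2.1|)^2 ≤ 9*L^4*(2*b^2 + 2*L^2*|p.2.1|^2) :=
          mul_le_mul_of_nonneg_left h (by positivity)
    _ = 9*L^4*(2*L^2) * p.2.1^2 + 9*L^4*(2*b^2) := by rw [sq_abs]; ring
  have p2 : Integrable (fun p : ℝ×ℝ×ℝ => 9*L^4*(a+L*|p.1|)^2) μ := by
    refine Integrable.mono (((int_x2 hμ2).const_mul (9*L^4*(2*L^2))).add
        (integrable_const (9*L^4*(2*a^2))))
      ((continuous_const.mul (hax.pow 2)).aestronglyMeasurable) (ae_of_all _ fun p => ?_)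
    simp only [Pi.add_apply, Real.norm_eq_abs]
    refine abs_le_abs_of_nonneg (by positivity) ?_
    have h : (a + L*|p.1|)^2 ≤ 2*a^2 + 2*L^2*|p.1|^2 := by
      nlinarith [sq_nonneg (a - L*|p.1|)]
    calc 9*L^4*(a+L*|p.1|)^2 ≤ 9*L^4*(2*a^2 + 2*L^2*|p.1|^2) :=
          mul_le_mul_of_nonneg_left h (by positivity)
    _ = 9*L^4*(2*L^2) * p.1^2 + 9*L^4*(2*a^2) := by rw [sq_abs]; ring
  have p3 : Integrable (fun p : ℝ×ℝ×ℝ => L^2*((a+L*|p.1|)*(b+L*|p.2.1|))^2) μ := by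
    refine Integrable.mono (((hμ4a.add hμ4b).const_mul (L^2*(4*L^4))).add
        (integrable_const (L^2*(4*a^4+4*b^4))))
      ((continuous_const.mul ((hax.mul hby).pow 2)).aestronglyMeasurable)
      (ae_of_all _ fun p => ?_)
    simp only [Pi.add_apply, Real.norm_eq_abs]
    refine abs_le_abs_of_nonneg (by positivity) ?_
    obtain ⟨x, ⟨y, z⟩⟩ := p
    simp only
    have hX : |x|^2 = x^2 := sq_abs x
    have hY : |y|^2 = y^2 := sq_abs y
    have hsq1 : (a+L*|x|)^2 ≤ 2*a^2 + 2*L^2*x^2 := by nlinarith [sq_nonneg (a - L*|x|)]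
    have hsq2 : (b+L*|y|)^2 ≤ 2*b^2 + 2*L^2*y^2 := by nlinarith [sq_nonneg (b - L*|y|)]
    have hprod : ((a+L*|x|)*(b+L*|y|))^2 ≤ (2*a^2+2*L^2*x^2) * (2*b^2+2*L^2*y^2) := by
      rw [mul_pow]
      exact mul_le_mul hsq1 hsq2 (sq_nonneg _) (by positivity)
    have hexp : (2*a^2+2*L^2*x^2) * (2*b^2+2*L^2*y^2) ≤ 4*a^4+4*b^4+4*L^4*(x^4+y^4) := by
      nlinarith [sq_nonneg (a^2 - b^2), sq_nonneg (a^2 - L^2*y^2), sq_nonneg (L^2*x^2 - b^2),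
        sq_nonneg (L^2*x^2 - L^2*y^2)]
    have hLsq : (0:ℝ) ≤ L^2 := sq_nonneg L
    nlinarith [mul_le_mul_of_nonneg_left (hprod.trans hexp) hLsq]
  exact (p1.add p2).add p3

private lemma int_comp_fst {π : Measure ((ℝ×ℝ×ℝ)×(ℝ×ℝ×ℝ))} {μ : Measure (ℝ×ℝ×ℝ)}
    (h1 : π.map Prod.fst = μ) {g : ℝ×ℝ×ℝ → ℝ} (hg : Continuous g) (hgi : Integrable g μ) :
    Integrable (fun p : (ℝ×ℝ×ℝ)×(ℝ×ℝ×ℝ) => g p.1) π := by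
  have h : Integrable g (π.map Prod.fst) := by rw [h1]; exact hgi
  exact (integrable_map_measure hg.aestronglyMeasurable measurable_fst.aemeasurable).mp h

private lemma int_comp_snd {π : Measure ((ℝ×ℝ×ℝ)×(ℝ×ℝ×ℝ))} {μ : Measure (ℝ×ℝ×ℝ)}
    (h2 : π.map Prod.snd = μ) {g : ℝ×ℝ×ℝ → ℝ} (hg : Continuous g) (hgi : Integrable g μ) :
    Integrable (fun p : (ℝ×ℝ×ℝ)×(ℝ×ℝ×ℝ) => g p.2) π := by
  have h : Integrable g (π.map Prod.snd) := by rw [h2]; exact hgi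
  exact (integrable_map_measure hg.aestronglyMeasurable measurable_snd.aemeasurable).mp h

private lemma integral_comp_fst {π : Measure ((ℝ×ℝ×ℝ)×(ℝ×ℝ×ℝ))} {μ : Measure (ℝ×ℝ×ℝ)}
    (h1 : π.map Prod.fst = μ) {g : ℝ×ℝ×ℝ → ℝ} (hg : Continuous g) :
    ∫ x, g x ∂μ = ∫ p, g p.1 ∂π := by
  rw [← h1, integral_map measurable_fst.aemeasurable hg.aestronglyMeasurable]

private lemma integral_comp_snd {π : Measure ((ℝ×ℝ×ℝ)×(ℝ×ℝ×ℝ))} {μ : Measure (ℝ×ℝ×ℝ)}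
    (h2 : π.map Prod.snd = μ) {g : ℝ×ℝ×ℝ → ℝ} (hg : Continuous g) :
    ∫ x, g x ∂μ = ∫ p, g p.2 ∂π := by
  rw [← h2, integral_map measurable_snd.aemeasurable hg.aestronglyMeasurable]

set_option maxHeartbeats 4000000 in
/-- If `μ` has finite second moments and marginals with finite fourth moments, and
`f₁, f₂, f₃` are `L`-Lipschitz with `f₃` bounded by `L`, then there is `C = C(μ, L)` such
that for all `μ'` with finite second moments,
`|E_μ[f₁ f₂ f₃] − E_{μ'}[f₁ f₂ f₃]| ≤ C max(W₂(μ,μ'), W₂(μ,μ')²)`. -/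
theorem stmt_11 (μ : Measure (ℝ × ℝ × ℝ)) [IsProbabilityMeasure μ]
    (hμ2 : Integrable (fun p => p.1 ^ 2 + p.2.1 ^ 2 + p.2.2 ^ 2) μ)
    (hμ4a : Integrable (fun p => p.1 ^ 4) μ)
    (hμ4b : Integrable (fun p => p.2.1 ^ 4) μ)
    (hμ4c : Integrable (fun p => p.2.2 ^ 4) μ)
    (L : ℝ) (hL : 0 < L) (f₁ f₂ f₃ : ℝ → ℝ)
    (hf₁ : LipschitzWith (Real.toNNReal L) f₁)
    (hf₂ : LipschitzWith (Real.toNNReal L) f₂)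
    (hf₃ : LipschitzWith (Real.toNNReal L) f₃)
    (hf₃bd : ∀ x, |f₃ x| ≤ L) :
    ∃ C : ℝ, ∀ μ' : Measure (ℝ × ℝ × ℝ), IsProbabilityMeasure μ' →
      Integrable (fun p => p.1 ^ 2 + p.2.1 ^ 2 + p.2.2 ^ 2) μ' →
      |(∫ p, f₁ p.1 * f₂ p.2.1 * f₃ p.2.2 ∂μ) - ∫ p, f₁ p.1 * f₂ p.2.1 * f₃ p.2.2 ∂μ'|
        ≤ C * max (W2 μ μ') (W2 μ μ' ^ 2) := by
  have hL0 : 0 ≤ L := hL.le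
  set a := |f₁ 0| with ha_def
  set b := |f₂ 0| with hb_def
  have ha : 0 ≤ a := abs_nonneg _
  have hb : 0 ≤ b := abs_nonneg _
  set F : ℝ×ℝ×ℝ → ℝ := fun p => f₁ p.1 * f₂ p.2.1 * f₃ p.2.2 with hF_def
  set G : ℝ×ℝ×ℝ → ℝ := fun p => 9*L^4*(b+L*|p.2.1|)^2 + 9*L^4*(a+L*|p.1|)^2
      + L^2*((a+L*|p.1|)*(b+L*|p.2.1|))^2 with hG_def
  have hGint : Integrable G μ := int_G hμ2 hμ4a hμ4b L a b hL0 ha hb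
  have hGcont : Continuous G := by
    rw [hG_def]
    have hax : Continuous fun p : ℝ×ℝ×ℝ => a + L*|p.1| :=
      continuous_const.add (continuous_const.mul continuous_fst.abs)
    have hby : Continuous fun p : ℝ×ℝ×ℝ => b + L*|p.2.1| :=
      continuous_const.add (continuous_const.mul (continuous_fst.comp continuous_snd).abs)
    exact ((continuous_const.mul (hby.pow 2)).add
      (continuous_const.mul (hax.pow 2))).add
      (continuous_const.mul ((hax.mul hby).pow 2))
  have hGnn : 0 ≤ ∫ x, G x ∂μ := by
    refine integral_nonneg fun p => ?_
    simp only [hG_def]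
    positivity
  have hFcont : Continuous F :=
    ((hf₁.continuous.comp continuous_fst).mul
      (hf₂.continuous.comp (continuous_fst.comp continuous_snd))).mul
      (hf₃.continuous.comp (continuous_snd.comp continuous_snd))
  have hFμ : Integrable F μ := int_F hμ2 hL0 hf₁ hf₂ hf₃ hf₃bd
  set KG := ∫ x, G x ∂μ with hKG_def
  refine ⟨KG/2 + 1/2 + 3*L^3, ?_⟩
  intro μ' hμ'p hμ'2
  haveI := hμ'p
  have hFμ' : Integrable F μ' := int_F hμ'2 hL0 hf₁ hf₂ hf₃ hf₃bd
  set W := W2 μ μ' with hW_def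
  set D := |(∫ x, F x ∂μ) - ∫ x, F x ∂μ'| with hD_def
  have hD0 : 0 ≤ D := abs_nonneg _
  -- the coupling estimate
  have hcoup : ∀ π : Measure ((ℝ×ℝ×ℝ)×(ℝ×ℝ×ℝ)), IsProbabilityMeasure π →
      π.map Prod.fst = μ → π.map Prod.snd = μ' → ∀ t : ℝ, 0 < t →
      D ≤ t/2 * KG + (1/(2*t) + 3*L^3) *
        ∫ p : (ℝ×ℝ×ℝ)×(ℝ×ℝ×ℝ),
          ((p.1.1-p.2.1)^2 + (p.1.2.1-p.2.2.1)^2 + (p.1.2.2-p.2.2.2)^2) ∂π := by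
    intro π hπ h1 h2 t ht
    haveI := hπ
    set d2 : (ℝ×ℝ×ℝ)×(ℝ×ℝ×ℝ) → ℝ :=
      fun p => (p.1.1-p.2.1)^2 + (p.1.2.1-p.2.2.1)^2 + (p.1.2.2-p.2.2.2)^2 with hd2_def
    have hqcont : Continuous fun p : ℝ×ℝ×ℝ => p.1^2+p.2.1^2+p.2.2^2 := by fun_prop
    have hq1 : Integrable (fun p : (ℝ×ℝ×ℝ)×(ℝ×ℝ×ℝ) =>
        p.1.1^2 + p.1.2.1^2 + p.1.2.2^2) π := int_comp_fst h1 hqcont hμ2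
    have hq2 : Integrable (fun p : (ℝ×ℝ×ℝ)×(ℝ×ℝ×ℝ) =>
        p.2.1^2 + p.2.2.1^2 + p.2.2.2^2) π := int_comp_snd h2 hqcont hμ'2
    have hd2cont : Continuous d2 := by rw [hd2_def]; fun_prop
    have hd2int : Integrable d2 π := by
      refine Integrable.mono ((hq1.add hq2).const_mul 2)
        hd2cont.aestronglyMeasurable (ae_of_all _ fun p => ?_)
      simp only [hd2_def, Real.norm_eq_abs, Pi.add_apply]
      refine abs_le_abs_of_nonneg (by positivity) ?_
      nlinarith [sq_nonneg (p.1.1+p.2.1), sq_nonneg (p.1.2.1+p.2.2.1),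
        sq_nonneg (p.1.2.2+p.2.2.2)]
    have hd2nn : 0 ≤ ∫ p, d2 p ∂π := by
      refine integral_nonneg fun p => ?_
      simp only [hd2_def]; positivity
    have hGf : Integrable (fun p : (ℝ×ℝ×ℝ)×(ℝ×ℝ×ℝ) => G p.1) π := int_comp_fst h1 hGcont hGint
    have hFf : Integrable (fun p : (ℝ×ℝ×ℝ)×(ℝ×ℝ×ℝ) => F p.1) π := int_comp_fst h1 hFcont hFμ
    have hFs : Integrable (fun p : (ℝ×ℝ×ℝ)×(ℝ×ℝ×ℝ) => F p.2) π := int_comp_snd h2 hFcont hFμ'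
    have heq1 : ∫ x, F x ∂μ = ∫ p, F p.1 ∂π := integral_comp_fst h1 hFcont
    have heq2 : ∫ x, F x ∂μ' = ∫ p, F p.2 ∂π := integral_comp_snd h2 hFcont
    have heqG : ∫ x, G x ∂μ = ∫ p, G p.1 ∂π := integral_comp_fst h1 hGcont
    have hpt : ∀ p : (ℝ×ℝ×ℝ)×(ℝ×ℝ×ℝ),
        ‖F p.1 - F p.2‖ ≤ t/2 * G p.1 + (1/(2*t)+3*L^3) * d2 p := by
      rintro ⟨⟨x, y, z⟩, ⟨x', y', z'⟩⟩
      simp only [hF_def, hG_def, hd2_def, Real.norm_eq_abs]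
      have hbA : |f₁ x| ≤ a + L * |x| := lip_bound hL0 hf₁ x
      have hbB : |f₂ y| ≤ b + L * |y| := lip_bound hL0 hf₂ y
      have hbA' : |f₁ x'| ≤ a + L*|x| + L*|x - x'| := by
        have h1' := lip_abs hL0 hf₁ x' x
        have h3' : |f₁ x'| ≤ |f₁ x' - f₁ x| + |f₁ x| := by
          calc |f₁ x'| = |(f₁ x' - f₁ x) + f₁ x| := by ring_nf
          _ ≤ |f₁ x' - f₁ x| + |f₁ x| := abs_add_le _ _
        rw [abs_sub_comm x' x] at h1'
        linarith
      have hbB' : |f₂ y'| ≤ b + L*|y| + L*|y - y'| := by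
        have h1' := lip_abs hL0 hf₂ y' y
        have h3' : |f₂ y'| ≤ |f₂ y' - f₂ y| + |f₂ y| := by
          calc |f₂ y'| = |(f₂ y' - f₂ y) + f₂ y| := by ring_nf
          _ ≤ |f₂ y' - f₂ y| + |f₂ y| := abs_add_le _ _
        rw [abs_sub_comm y' y] at h1'
        linarith
      have hbP : |f₃ z| ≤ L := hf₃bd z
      have hAA : |f₁ x - f₁ x'| ≤ L*|x-x'| := lip_abs hL0 hf₁ x x'
      have hBB : |f₂ y - f₂ y'| ≤ L*|y-y'| := lip_abs hL0 hf₂ y y'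
      have hPP : |f₃ z - f₃ z'| ≤ L*|z-z'| := lip_abs hL0 hf₃ z z'
      have hPP2 : |f₃ z - f₃ z'| ≤ 2*L := by
        have := abs_sub (f₃ z) (f₃ z')
        have := hf₃bd z'
        linarith
      have key := key_arith L t a b |x| |y| |x-x'| |y-y'| |z-z'|
        (f₁ x) (f₁ x') (f₂ y) (f₂ y') (f₃ z) (f₃ z')
        hL0 ht (abs_nonneg _) (abs_nonneg _) (abs_nonneg _) (abs_nonneg _) (abs_nonneg _)
        ha hb hbA' hbB hbB' hbP hAA hBB hPP hPP2
      calc |f₁ x * f₂ y * f₃ z - f₁ x' * f₂ y' * f₃ z'|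
          ≤ (t/2) * (9*L^4*(b+L*|y|)^2 + 9*L^4*(a+L*|x|)^2 + L^2*((a+L*|x|)*(b+L*|y|))^2)
            + (1/(2*t) + 3*L^3) * (|x-x'|^2+|y-y'|^2+|z-z'|^2) := key
      _ = t/2 * (9*L^4*(b+L*|y|)^2 + 9*L^4*(a+L*|x|)^2 + L^2*((a+L*|x|)*(b+L*|y|))^2)
            + (1/(2*t)+3*L^3) * ((x-x')^2+(y-y')^2+(z-z')^2) := by
          rw [sq_abs, sq_abs, sq_abs]
    have hmaj : Integrable (fun p : (ℝ×ℝ×ℝ)×(ℝ×ℝ×ℝ) =>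
        t/2 * G p.1 + (1/(2*t)+3*L^3) * d2 p) π :=
      (hGf.const_mul _).add (hd2int.const_mul _)
    have hbig : ‖∫ p, (F p.1 - F p.2) ∂π‖ ≤
        ∫ p, (t/2 * G p.1 + (1/(2*t)+3*L^3) * d2 p) ∂π :=
      norm_integral_le_of_norm_le hmaj (ae_of_all _ hpt)
    have hsplit : ∫ p, (t/2 * G p.1 + (1/(2*t)+3*L^3) * d2 p) ∂π
        = t/2 * (∫ p, G p.1 ∂π) + (1/(2*t)+3*L^3) * ∫ p, d2 p ∂π := by
      rw [integral_add (hGf.const_mul _) (hd2int.const_mul _),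
        integral_const_mul, integral_const_mul]
    rw [integral_sub hFf hFs, Real.norm_eq_abs] at hbig
    rw [hD_def, heq1, heq2, hKG_def, heqG]
    rw [hsplit] at hbig
    exact hbig
  -- the set of couplings
  have hWs : W = sInf { r : ℝ | ∃ π : Measure ((ℝ × ℝ × ℝ) × (ℝ × ℝ × ℝ)),
      IsProbabilityMeasure π ∧ π.map Prod.fst = μ ∧ π.map Prod.snd = μ' ∧
      r = Real.sqrt (∫ p, ((p.1.1 - p.2.1) ^ 2 + (p.1.2.1 - p.2.2.1) ^ 2
          + (p.1.2.2 - p.2.2.2) ^ 2) ∂π) } := rfl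
  have hSne : Set.Nonempty { r : ℝ | ∃ π : Measure ((ℝ × ℝ × ℝ) × (ℝ × ℝ × ℝ)),
      IsProbabilityMeasure π ∧ π.map Prod.fst = μ ∧ π.map Prod.snd = μ' ∧
      r = Real.sqrt (∫ p, ((p.1.1 - p.2.1) ^ 2 + (p.1.2.1 - p.2.2.1) ^ 2
          + (p.1.2.2 - p.2.2.2) ^ 2) ∂π) } := by
    refine ⟨_, μ.prod μ', inferInstance, ?_, ?_, rfl⟩
    · rw [Measure.map_fst_prod]; simp
    · rw [Measure.map_snd_prod]; simp
  have hW0 : 0 ≤ W := by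
    rw [hWs]
    refine Real.sInf_nonneg ?_
    rintro r ⟨π, hπ, h1, h2, rfl⟩
    exact Real.sqrt_nonneg _
  clear_value W D KG
  have hstep2 : ∀ t : ℝ, 0 < t → ∀ ε : ℝ, 0 < ε →
      D ≤ t/2*KG + (1/(2*t)+3*L^3)*(W+ε)^2 := by
    intro t ht ε hε
    obtain ⟨r, hrS, hrlt⟩ := Real.lt_sInf_add_pos hSne hε
    obtain ⟨π, hπ, h1, h2, rfl⟩ := hrS
    rw [← hWs] at hrlt
    have hR0 : 0 ≤ ∫ p : (ℝ×ℝ×ℝ)×(ℝ×ℝ×ℝ),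
        ((p.1.1-p.2.1)^2 + (p.1.2.1-p.2.2.1)^2 + (p.1.2.2-p.2.2.2)^2) ∂π :=
      integral_nonneg fun p => by positivity
    have hRle : (∫ p : (ℝ×ℝ×ℝ)×(ℝ×ℝ×ℝ),
        ((p.1.1-p.2.1)^2 + (p.1.2.1-p.2.2.1)^2 + (p.1.2.2-p.2.2.2)^2) ∂π) ≤ (W+ε)^2 := by
      calc (∫ p : (ℝ×ℝ×ℝ)×(ℝ×ℝ×ℝ),
          ((p.1.1-p.2.1)^2 + (p.1.2.1-p.2.2.1)^2 + (p.1.2.2-p.2.2.2)^2) ∂π)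
          = (Real.sqrt (∫ p : (ℝ×ℝ×ℝ)×(ℝ×ℝ×ℝ),
            ((p.1.1-p.2.1)^2 + (p.1.2.1-p.2.2.1)^2 + (p.1.2.2-p.2.2.2)^2) ∂π))^2 :=
            (Real.sq_sqrt hR0).symm
      _ ≤ (W+ε)^2 := by
          apply pow_le_pow_left₀ (Real.sqrt_nonneg _) hrlt.le
    have hc : (0:ℝ) ≤ 1/(2*t)+3*L^3 := by positivity
    have h := hcoup π hπ h1 h2 t ht
    have h2' := mul_le_mul_of_nonneg_left hRle hc
    linarith
  have hstep3 : ∀ t : ℝ, 0 < t → D ≤ t/2*KG + (1/(2*t)+3*L^3)*W^2 := by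
    intro t ht
    by_contra hcon
    push_neg at hcon
    set c := 1/(2*t)+3*L^3 with hc_def
    have hcpos : 0 < c := by rw [hc_def]; positivity
    clear_value c
    set δ := D - (t/2*KG + c*W^2) with hδ_def
    have hδpos : 0 < δ := by rw [hδ_def]; linarith
    clear_value δ
    set ε := min 1 (δ/(2*c*(2*W+1))) with hε_def
    have hεpos : 0 < ε := lt_min one_pos (by positivity)
    have h1 : D ≤ t/2*KG + c*(W+ε)^2 := by
      rw [hc_def]; exact hstep2 t ht ε hεpos
    have hε1 : ε ≤ 1 := min_le_left _ _
    have hε2 : ε ≤ δ/(2*c*(2*W+1)) := min_le_right _ _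
    clear_value ε
    have hW1 : (0:ℝ) < 2*W+1 := by linarith
    have hb1 : ε*(2*W+ε) ≤ ε*(2*W+1) :=
      mul_le_mul_of_nonneg_left (by linarith) hεpos.le
    have hb2 : c*(ε*(2*W+1)) ≤ δ/2 := by
      have h3 : c*(ε*(2*W+1)) ≤ c*((δ/(2*c*(2*W+1)))*(2*W+1)) := by
        apply mul_le_mul_of_nonneg_left _ hcpos.le
        exact mul_le_mul_of_nonneg_right hε2 hW1.le
      have h4 : c*((δ/(2*c*(2*W+1)))*(2*W+1)) = δ/2 := by
        field_simp
      linarith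
    have hexp : (W+ε)^2 = W^2 + ε*(2*W+ε) := by ring
    have h5 : c*(W^2 + ε*(2*W+ε)) ≤ c*W^2 + δ/2 := by
      have h6 : c*(ε*(2*W+ε)) ≤ c*(ε*(2*W+1)) :=
        mul_le_mul_of_nonneg_left hb1 hcpos.le
      have : c*(W^2 + ε*(2*W+ε)) = c*W^2 + c*(ε*(2*W+ε)) := by ring
      linarith
    rw [hexp] at h1
    linarith [h1, h5, hδpos]
  rcases eq_or_lt_of_le hW0 with hWz | hWpos
  · -- W = 0
    have hDle : D ≤ 0 := by
      by_contra hcon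
      push_neg at hcon
      have hKG1 : (0:ℝ) < KG + 1 := by linarith
      have h := hstep3 (D/(KG+1)) (by positivity)
      rw [← hWz] at h
      have h' : D ≤ D/(KG+1)/2*KG := by
        have : (1/(2*(D/(KG+1)))+3*L^3)*(0:ℝ)^2 = 0 := by ring
        linarith [h, this]
      have hlt : D/(KG+1)/2*KG < D := by
        rw [div_div, div_mul_eq_mul_div, div_lt_iff₀ (by positivity)]
        nlinarith
      linarith
    rw [← hWz]
    have : ((0:ℝ))^2 = 0 := by norm_num
    rw [this, max_self, mul_zero]
    exact hDle
  · -- 0 < W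
    have h := hstep3 W hWpos
    have hexp : W/2*KG + (1/(2*W)+3*L^3)*W^2 = KG/2*W + 1/2*W + 3*L^3*W^2 := by
      field_simp
      ring
    have hD1 : D ≤ KG/2*W + 1/2*W + 3*L^3*W^2 := by linarith
    have hWM : W ≤ max W (W^2) := le_max_left _ _
    have hW2M : W^2 ≤ max W (W^2) := le_max_right _ _
    have t1 : KG/2*W ≤ KG/2*(max W (W^2)) :=
      mul_le_mul_of_nonneg_left hWM (by linarith)
    have t2 : 1/2*W ≤ 1/2*(max W (W^2)) :=
      mul_le_mul_of_nonneg_left hWM (by norm_num)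
    have t3 : 3*L^3*W^2 ≤ 3*L^3*(max W (W^2)) :=
      mul_le_mul_of_nonneg_left hW2M (by positivity)
    have hfin : (KG/2 + 1/2 + 3*L^3) * max W (W^2)
        = KG/2*(max W (W^2)) + 1/2*(max W (W^2)) + 3*L^3*(max W (W^2)) := by ring
    rw [hfin]
    linarith
end
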